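/- Let Ω = {Z_1,…,Z_N} be a finite subset of V_nc with intertwining algebra S ⊆ ℂ^{N₀×N₀} as above. A graded kernel K on Ω with values in L(A_nc, L(Y)_nc) is a completely positive noncommutative kernel if and only if the associated map φ_K : A^{N₀×N₀} → L(Y^{N₀}) is a completely positive (S,S*)-bimodule map. Conversely, every completely positive (S,S*)-bimodule map φ : A^{N₀×N₀} → L(Y^{N₀}) equals φ_K for a uniquely determined completely positive noncommutative kernel K on Ω. -/

import Mathlib

open scoped ComplexOrder Matrix

noncomputable section

namespace NCK

/-! ## Actions of scalar complex matrices on matrices over a `ℂ`-module -/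

/-- Left action `α · Z` of a complex scalar matrix on a matrix over a `ℂ`-module. -/
def cMul {p q r : Type*} [Fintype q] {M : Type*} [AddCommMonoid M] [Module ℂ M]
    (α : Matrix p q ℂ) (Z : Matrix q r M) : Matrix p r M :=
  Matrix.of fun i k => ∑ j, α i j • Z j k

/-- Right action `Z · α` of a complex scalar matrix on a matrix over a `ℂ`-module. -/
def mulC {p q r : Type*} [Fintype q] {M : Type*} [AddCommMonoid M] [Module ℂ M]
    (Z : Matrix p q M) (α : Matrix q r ℂ) : Matrix p r M :=
  Matrix.of fun i k => ∑ j, α j k • Z i j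

/-- The sandwich `α · P · βᴴ`. -/
def sandwich {p q p' q' : Type*} [Fintype p] [Fintype q] {M : Type*} [AddCommMonoid M]
    [Module ℂ M] (α : Matrix p' p ℂ) (P : Matrix p q M) (β : Matrix q' q ℂ) :
    Matrix p' q' M :=
  mulC (cMul α P) βᴴ

/-- A scalar complex matrix viewed as a matrix over the algebra `A`, i.e. `α ⊗ 1_A`. -/
def matC {p q : Type*} (A : Type*) [Semiring A] [Algebra ℂ A] (α : Matrix p q ℂ) :
    Matrix p q A :=
  α.map (algebraMap ℂ A)

/-! ## Positivity and norm bounds for matrices over `*`-rings and for operator matrices -/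

/-- Positivity of a square matrix over a `*`-ring, via factorization `Q = Cᴴ * C`
(the standard characterization of positivity in a matrix `C⋆`-algebra). -/
def MatPos {n : Type*} [Fintype n] {R : Type*} [NonUnitalSemiring R] [StarRing R]
    (Q : Matrix n n R) : Prop :=
  ∃ C : Matrix n n R, Q = Cᴴ * C

/-- `‖Q‖ ≤ c` for a matrix over a unital `*`-algebra, expressed as positivity of
`c² • 1 - Qᴴ * Q`. -/
def MatNormLe {n : Type*} [Fintype n] [DecidableEq n] {R : Type*} [Ring R] [StarRing R]
    [Algebra ℂ R] (Q : Matrix n n R) (c : ℝ) : Prop :=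
  MatPos ((((c : ℂ) ^ 2) • (1 : Matrix n n R)) - Qᴴ * Q)

/-- Positivity of an element of a `C⋆`-algebra, via factorization `x = (star c) * c`. -/
def elemPos {R : Type*} [Mul R] [Star R] (x : R) : Prop :=
  ∃ c : R, x = star c * c

variable {Y : Type*} [NormedAddCommGroup Y] [InnerProductSpace ℂ Y]

/-- Positivity of a square matrix of Hilbert-space operators, via the quadratic form. -/
def OpMatPos {n : Type*} [Fintype n] (T : Matrix n n (Y →L[ℂ] Y)) : Prop :=
  ∀ y : n → Y, 0 ≤ ∑ i, ∑ j, (inner ℂ (y i) (T i j (y j)) : ℂ)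

/-- Positivity of a doubly indexed (block) matrix of Hilbert-space operators. -/
def OpMatPos2 {k n : Type*} [Fintype k] [Fintype n]
    (T : Matrix k k (Matrix n n (Y →L[ℂ] Y))) : Prop :=
  ∀ y : k → n → Y, 0 ≤ ∑ i, ∑ j, ∑ a, ∑ b, (inner ℂ (y i a) (T i j a b (y j b)) : ℂ)

/-- `‖T‖ ≤ c` for a matrix of Hilbert-space operators. -/
def OpMatNormLe {p q : Type*} [Fintype p] [Fintype q]
    (T : Matrix p q (Y →L[ℂ] Y)) (c : ℝ) : Prop :=
  ∀ y : q → Y, ∑ i, ‖∑ j, T i j (y j)‖ ^ 2 ≤ c ^ 2 * ∑ j, ‖y j‖ ^ 2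

/-- `‖T‖ ≤ c` for a doubly indexed (block) matrix of Hilbert-space operators. -/
def OpMatNormLe2 {k n : Type*} [Fintype k] [Fintype n]
    (T : Matrix k k (Matrix n n (Y →L[ℂ] Y))) (c : ℝ) : Prop :=
  ∀ y : k → n → Y,
    ∑ i, ∑ a, ‖∑ j, ∑ b, T i j a b (y j b)‖ ^ 2 ≤ c ^ 2 * ∑ j, ∑ b, ‖y j b‖ ^ 2

/-! ## Completely positive / completely bounded / bimodule maps on matrix algebras -/

/-- A map `φ : A^{ι×ι} → L(Y)^{ι×ι} (≅ L(Y^ι))` is completely positive if all its matrix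
amplifications map positive elements to positive elements. -/
def IsCPMap {A : Type*} [NonUnitalSemiring A] [StarRing A] {ι : Type*} [Fintype ι]
    (φ : Matrix ι ι A → Matrix ι ι (Y →L[ℂ] Y)) : Prop :=
  ∀ (k : ℕ) (Q : Matrix (Fin k) (Fin k) (Matrix ι ι A)),
    MatPos Q → OpMatPos2 (Matrix.of fun i j => φ (Q i j))

/-- A map `φ : A^{ι×ι} → L(Y)^{ι×ι} (≅ L(Y^ι))` is completely bounded if the norms of its
matrix amplifications are uniformly bounded. -/
def IsCBMap {A : Type*} [Ring A] [StarRing A] [Algebra ℂ A] {ι : Type*} [Fintype ι]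
    [DecidableEq ι] (φ : Matrix ι ι A → Matrix ι ι (Y →L[ℂ] Y)) : Prop :=
  ∃ c : ℝ, ∀ (k : ℕ) (Q : Matrix (Fin k) (Fin k) (Matrix ι ι A)),
    MatNormLe Q 1 → OpMatNormLe2 (Matrix.of fun i j => φ (Q i j)) c

/-- `φ` is an `(S, S^*)`-bimodule map: `φ (α · P · β^*) = L_α (φ P) L_{β^*}` for `α, β ∈ S`. -/
def IsBimod {ι : Type*} [Fintype ι] {A B : Type*} [AddCommMonoid A] [Module ℂ A]
    [AddCommMonoid B] [Module ℂ B] (S : Set (Matrix ι ι ℂ))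
    (φ : Matrix ι ι A → Matrix ι ι B) : Prop :=
  ∀ α ∈ S, ∀ β ∈ S, ∀ P, φ (sandwich α P β) = sandwich α (φ P) β

/-! ## Noncommutative sets, functions and kernels -/

/-- A subset of the noncommutative space `V_nc`, given levelwise. -/
abbrev NCSet (V : Type*) := ∀ n : ℕ, Set (Matrix (Fin n) (Fin n) V)

/-- The type of graded kernels on all of `V_nc` with values in `L(A_nc, B_nc)`;
a kernel "on `Ω`" is such a family, with all conditions imposed only at points of `Ω`. -/
abbrev KernelFam (V A B : Type*) :=
  ∀ n m : ℕ, Matrix (Fin n) (Fin n) V → Matrix (Fin m) (Fin m) V →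
    (Matrix (Fin n) (Fin m) A → Matrix (Fin n) (Fin m) B)

/-- A graded kernel assigns a *linear* map `K(Z,W) : A^{n×m} → B^{n×m}` to points of `Ω`. -/
def GradedLinearOn {V A B : Type*} [AddCommMonoid A] [Module ℂ A] [AddCommMonoid B]
    [Module ℂ B] (Ω : NCSet V) (K : KernelFam V A B) : Prop :=
  ∀ n m Z W, Z ∈ Ω n → W ∈ Ω m → IsLinearMap ℂ (K n m Z W)

/-- `K` respects intertwinings at points of `Ω`: whenever `α Z = Z' α` and `β W = W' β`,
`α K(Z,W)(P) β^* = K(Z',W')(α P β^*)`. -/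
def IsNCKernelOn {V : Type*} [AddCommMonoid V] [Module ℂ V] {A B : Type*}
    [AddCommMonoid A] [Module ℂ A] [AddCommMonoid B] [Module ℂ B]
    (Ω : NCSet V) (K : KernelFam V A B) : Prop :=
  ∀ (n n' m m' : ℕ) (Z : Matrix (Fin n) (Fin n) V) (Z' : Matrix (Fin n') (Fin n') V)
    (W : Matrix (Fin m) (Fin m) V) (W' : Matrix (Fin m') (Fin m') V),
    Z ∈ Ω n → Z' ∈ Ω n' → W ∈ Ω m → W' ∈ Ω m' →
    ∀ (α : Matrix (Fin n') (Fin n) ℂ) (β : Matrix (Fin m') (Fin m) ℂ),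
      cMul α Z = mulC Z' α → cMul β W = mulC W' β →
      ∀ P, sandwich α (K n m Z W P) β = K n' m' Z' W' (sandwich α P β)

/-- `K` is Hermitian on `Ω`: `K(W,Z)(P^*) = (K(Z,W)(P))^*`. -/
def IsHermitianOn {V A B : Type*} [Star A] [Star B] (Ω : NCSet V) (K : KernelFam V A B) :
    Prop :=
  ∀ n m Z W, Z ∈ Ω n → W ∈ Ω m → ∀ P : Matrix (Fin n) (Fin m) A,
    K m n W Z Pᴴ = (K n m Z W P)ᴴ

/-- The complete positivity condition for a kernel with values in `L(A_nc, L(Y)_nc)`,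
in the Hilbert-space (quadratic form) formulation. -/
def IsCPOnH {V : Type*} {A : Type*} [NonUnitalSemiring A] [StarRing A]
    (Ω : NCSet V) (K : KernelFam V A (Y →L[ℂ] Y)) : Prop :=
  ∀ (L : ℕ) (ns : Fin L → ℕ) (Z : ∀ l, Matrix (Fin (ns l)) (Fin (ns l)) V),
    (∀ l, Z l ∈ Ω (ns l)) →
    ∀ (P : ∀ l, Matrix (Fin (ns l)) (Fin 1) A) (y : ∀ l, Fin (ns l) → Y),
      0 ≤ ∑ l, ∑ l', ∑ a, ∑ b,
        (inner ℂ (y l a) (K (ns l) (ns l') (Z l) (Z l') (P l * (P l')ᴴ) a b (y l' b)) : ℂ)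

/-- The complete positivity condition for a kernel with values in `L(A_nc, B_nc)`,
`B` a `C⋆`-algebra, in the `C⋆`-algebraic formulation. -/
def IsCPOnC {V : Type*} {A B : Type*} [NonUnitalSemiring A] [StarRing A]
    [NonUnitalSemiring B] [StarRing B] (Ω : NCSet V) (K : KernelFam V A B) : Prop :=
  ∀ (L : ℕ) (ns : Fin L → ℕ) (Z : ∀ l, Matrix (Fin (ns l)) (Fin (ns l)) V),
    (∀ l, Z l ∈ Ω (ns l)) →
    ∀ (a : ∀ l, Matrix (Fin (ns l)) (Fin 1) A) (b : ∀ l, Matrix (Fin (ns l)) (Fin 1) B),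
      elemPos (∑ l, ∑ l',
        ((b l)ᴴ * (K (ns l) (ns l') (Z l) (Z l') (a l * (a l')ᴴ)) * b l') 0 0)

/-- Completely positive noncommutative kernel on `Ω` (Hilbert-space-valued version). -/
def IsCPNCKernelOnH {V : Type*} [AddCommMonoid V] [Module ℂ V] {A : Type*}
    [NonUnitalSemiring A] [StarRing A] [Module ℂ A] (Ω : NCSet V)
    (K : KernelFam V A (Y →L[ℂ] Y)) : Prop :=
  GradedLinearOn Ω K ∧ IsNCKernelOn Ω K ∧ IsCPOnH Ω K

/-- Completely positive noncommutative kernel on `Ω` (`C⋆`-algebra-valued version). -/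
def IsCPNCKernelOnC {V : Type*} [AddCommMonoid V] [Module ℂ V] {A B : Type*}
    [NonUnitalSemiring A] [StarRing A] [Module ℂ A]
    [NonUnitalSemiring B] [StarRing B] [Module ℂ B] (Ω : NCSet V)
    (K : KernelFam V A B) : Prop :=
  GradedLinearOn Ω K ∧ IsNCKernelOn Ω K ∧ IsCPOnC Ω K

/-- Noncommutative function `H` on `Ω` with values in `W_nc`:
graded, and `Z α = α Z'` implies `H(Z) (α ⊗ 1) = (α ⊗ 1) H(Z')`. -/
def IsNCFunOn {V W : Type*} [AddCommMonoid V] [Module ℂ V] [AddCommMonoid W] [Module ℂ W]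
    (Ω : NCSet V) (H : ∀ n, Matrix (Fin n) (Fin n) V → Matrix (Fin n) (Fin n) W) : Prop :=
  ∀ (n m : ℕ) (Z : Matrix (Fin n) (Fin n) V) (Z' : Matrix (Fin m) (Fin m) V),
    Z ∈ Ω n → Z' ∈ Ω m → ∀ α : Matrix (Fin n) (Fin m) ℂ,
      mulC Z α = cMul α Z' → mulC (H n Z) α = cMul α (H m Z')

/-! ## Kernels on a finite (indexed) set of points -/

/-- Kernels on a finite set of points `Z i`, `i : Fin Np`, of sizes `d i`. -/
abbrev KernelIx {Np : ℕ} (d : Fin Np → ℕ) (A B : Type*) :=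
  ∀ i j : Fin Np, Matrix (Fin (d i)) (Fin (d j)) A → Matrix (Fin (d i)) (Fin (d j)) B

/-- Each value `K(Z_i, Z_j)` is a linear map. -/
def GradedLinearIx {Np : ℕ} {d : Fin Np → ℕ} {A B : Type*} [AddCommMonoid A] [Module ℂ A]
    [AddCommMonoid B] [Module ℂ B] (K : KernelIx d A B) : Prop :=
  ∀ i j, IsLinearMap ℂ (K i j)

/-- The respects-intertwinings condition for a kernel on the finite set of points `Z`. -/
def IsNCKernelIx {V : Type*} [AddCommMonoid V] [Module ℂ V] {Np : ℕ} {d : Fin Np → ℕ}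
    {A B : Type*} [AddCommMonoid A] [Module ℂ A] [AddCommMonoid B] [Module ℂ B]
    (Z : ∀ i, Matrix (Fin (d i)) (Fin (d i)) V) (K : KernelIx d A B) : Prop :=
  ∀ (i i' j j' : Fin Np) (α : Matrix (Fin (d i')) (Fin (d i)) ℂ)
    (β : Matrix (Fin (d j')) (Fin (d j)) ℂ),
    cMul α (Z i) = mulC (Z i') α → cMul β (Z j) = mulC (Z j') β →
    ∀ P, sandwich α (K i j P) β = K i' j' (sandwich α P β)

/-- `K(Z_j, Z_i)(P^*) = (K(Z_i, Z_j)(P))^*`. -/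
def IsHermitianIx {Np : ℕ} {d : Fin Np → ℕ} {A B : Type*} [Star A] [Star B]
    (K : KernelIx d A B) : Prop :=
  ∀ i j (P : Matrix (Fin (d i)) (Fin (d j)) A), K j i Pᴴ = (K i j P)ᴴ

/-- Complete positivity condition, Hilbert-space version, finite set of points. -/
def IsCPIxH {Np : ℕ} {d : Fin Np → ℕ} {A : Type*} [NonUnitalSemiring A] [StarRing A]
    (K : KernelIx d A (Y →L[ℂ] Y)) : Prop :=
  ∀ (L : ℕ) (f : Fin L → Fin Np) (P : ∀ l, Matrix (Fin (d (f l))) (Fin 1) A)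
    (y : ∀ l, Fin (d (f l)) → Y),
    0 ≤ ∑ l, ∑ l', ∑ a, ∑ b,
      (inner ℂ (y l a) (K (f l) (f l') (P l * (P l')ᴴ) a b (y l' b)) : ℂ)

/-- Complete positivity condition, `C⋆`-algebraic version, finite set of points. -/
def IsCPIxC {Np : ℕ} {d : Fin Np → ℕ} {A B : Type*} [NonUnitalSemiring A] [StarRing A]
    [NonUnitalSemiring B] [StarRing B] (K : KernelIx d A B) : Prop :=
  ∀ (L : ℕ) (f : Fin L → Fin Np) (a : ∀ l, Matrix (Fin (d (f l))) (Fin 1) A)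
    (b : ∀ l, Matrix (Fin (d (f l))) (Fin 1) B),
    elemPos (∑ l, ∑ l', ((b l)ᴴ * (K (f l) (f l') (a l * (a l')ᴴ)) * b l') 0 0)

/-- Completely positive nc kernel on a finite set of points (Hilbert version). -/
def IsCPNCKernelIxH {V : Type*} [AddCommMonoid V] [Module ℂ V] {Np : ℕ} {d : Fin Np → ℕ}
    {A : Type*} [NonUnitalSemiring A] [StarRing A] [Module ℂ A]
    (Z : ∀ i, Matrix (Fin (d i)) (Fin (d i)) V) (K : KernelIx d A (Y →L[ℂ] Y)) : Prop :=
  GradedLinearIx K ∧ IsNCKernelIx Z K ∧ IsCPIxH K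

/-- Completely positive nc kernel on a finite set of points (`C⋆` version). -/
def IsCPNCKernelIxC {V : Type*} [AddCommMonoid V] [Module ℂ V] {Np : ℕ} {d : Fin Np → ℕ}
    {A B : Type*} [NonUnitalSemiring A] [StarRing A] [Module ℂ A]
    [NonUnitalSemiring B] [StarRing B] [Module ℂ B]
    (Z : ∀ i, Matrix (Fin (d i)) (Fin (d i)) V) (K : KernelIx d A B) : Prop :=
  GradedLinearIx K ∧ IsNCKernelIx Z K ∧ IsCPIxC K

/-! ## The block-matrix encoding of a kernel on a finite set of points -/

/-- The block index set for the direct sum point `Z^{(0)} = ⊕ᵢ Z_i`. -/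
abbrev BIx {Np : ℕ} (d : Fin Np → ℕ) : Type := Σ i : Fin Np, Fin (d i)

/-- The direct sum `Z^{(0)} = ⊕ᵢ Z_i` of a finite family of nc points. -/
def dirSum {V : Type*} [Zero V] {Np : ℕ} {d : Fin Np → ℕ}
    (Z : ∀ i, Matrix (Fin (d i)) (Fin (d i)) V) : Matrix (BIx d) (BIx d) V :=
  Matrix.of fun x y =>
    if h : x.1 = y.1 then Z x.1 x.2 (Fin.cast (congrArg d h.symm) y.2) else 0

/-- The intertwining algebra `S = {α : α Z^{(0)} = Z^{(0)} α}` of the direct-sum point. -/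
def interAlg {V : Type*} [AddCommMonoid V] [Module ℂ V] {Np : ℕ} {d : Fin Np → ℕ}
    (Z : ∀ i, Matrix (Fin (d i)) (Fin (d i)) V) : Set (Matrix (BIx d) (BIx d) ℂ) :=
  {α | cMul α (dirSum Z) = mulC (dirSum Z) α}

/-- The block map `φ_K ([P_{ij}]) = [K(Z_i,Z_j)(P_{ij})]` associated with a kernel on a
finite set of points. -/
def phiK {Np : ℕ} {d : Fin Np → ℕ} {A B : Type*} (K : KernelIx d A B) :
    Matrix (BIx d) (BIx d) A → Matrix (BIx d) (BIx d) B :=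
  fun P => Matrix.of fun x y =>
    K x.1 y.1 (Matrix.of fun a b => P ⟨x.1, a⟩ ⟨y.1, b⟩) x.2 y.2

/-- The block map associated with a kernel and a finite tuple `f` of (indices of) points. -/
def phiKt {Np : ℕ} {d : Fin Np → ℕ} {A B : Type*} {L : ℕ} (f : Fin L → Fin Np)
    (K : KernelIx d A B) :
    Matrix (Σ l, Fin (d (f l))) (Σ l, Fin (d (f l))) A →
      Matrix (Σ l, Fin (d (f l))) (Σ l, Fin (d (f l))) B :=
  fun P => Matrix.of fun x y =>
    K (f x.1) (f y.1) (Matrix.of fun a b => P ⟨x.1, a⟩ ⟨y.1, b⟩) x.2 y.2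

/-- The block map associated with a general kernel and a finite tuple of points. -/
def phiKg {V A B : Type*} (K : KernelFam V A B) {L : ℕ} (ns : Fin L → ℕ)
    (Z : ∀ l, Matrix (Fin (ns l)) (Fin (ns l)) V) :
    Matrix (Σ l, Fin (ns l)) (Σ l, Fin (ns l)) A →
      Matrix (Σ l, Fin (ns l)) (Σ l, Fin (ns l)) B :=
  fun P => Matrix.of fun x y =>
    K (ns x.1) (ns y.1) (Z x.1) (Z y.1) (Matrix.of fun a b => P ⟨x.1, a⟩ ⟨y.1, b⟩) x.2 y.2

/-! ## Full nc sets and envelopes -/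

/-- Direct sum of two nc points. -/
def dsum2 {V : Type*} [Zero V] {n m : ℕ} (Z : Matrix (Fin n) (Fin n) V)
    (W : Matrix (Fin m) (Fin m) V) : Matrix (Fin (n + m)) (Fin (n + m)) V :=
  Matrix.of fun i j =>
    Sum.elim
      (fun a => Sum.elim (fun b => Z a b) (fun _ => (0 : V)) (finSumFinEquiv.symm j))
      (fun a => Sum.elim (fun _ => (0 : V)) (fun b => W a b) (finSumFinEquiv.symm j))
      (finSumFinEquiv.symm i)

/-- A full nc set: closed under direct sums and invariant under left injective
intertwinings. -/
def IsFullNC {V : Type*} [AddCommMonoid V] [Module ℂ V] (Ξ : NCSet V) : Prop :=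
  (∀ (n m : ℕ) (Z : Matrix (Fin n) (Fin n) V) (W : Matrix (Fin m) (Fin m) V),
      Z ∈ Ξ n → W ∈ Ξ m → dsum2 Z W ∈ Ξ (n + m)) ∧
  (∀ (n m : ℕ) (Z : Matrix (Fin n) (Fin n) V) (Z' : Matrix (Fin m) (Fin m) V)
      (ι : Matrix (Fin n) (Fin m) ℂ), Z ∈ Ξ n → Function.Injective ι.mulVec →
      cMul ι Z' = mulC Z ι → Z' ∈ Ξ m)

/-- The full nc envelope of a subset `Ω` of `V_nc`. -/
def fullEnvelope {V : Type*} [AddCommMonoid V] [Module ℂ V] (Ω : NCSet V) : NCSet V :=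
  fun n => {Z | ∀ Ξ : NCSet V, IsFullNC Ξ → (∀ k, Ω k ⊆ Ξ k) → Z ∈ Ξ n}

/-! ## 2×2 operator blocks -/

/-- A `2 × 2` matrix of operators on `Y`, as an operator on `Y ⊕ Y` (ℓ²-sum). -/
def blk2 (T : Matrix (Fin 2) (Fin 2) (Y →L[ℂ] Y)) :
    (PiLp 2 fun _ : Fin 2 => Y) →L[ℂ] (PiLp 2 fun _ : Fin 2 => Y) :=
  ((PiLp.continuousLinearEquiv 2 ℂ (fun _ : Fin 2 => Y)).symm.toContinuousLinearMap) ∘L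
    ((ContinuousLinearMap.pi fun i => ∑ j, (T i j) ∘L (ContinuousLinearMap.proj j)) ∘L
      ((PiLp.continuousLinearEquiv 2 ℂ (fun _ : Fin 2 => Y)).toContinuousLinearMap))


/-- Complete positivity for a map `φ : A → L(Y)` defined on a `C⋆`-algebra `A`. -/
def IsCPMapE {A : Type*} [NonUnitalSemiring A] [StarRing A] (φ : A → (Y →L[ℂ] Y)) : Prop :=
  ∀ (k : ℕ) (Q : Matrix (Fin k) (Fin k) A), MatPos Q →
    OpMatPos (Matrix.of fun i j => φ (Q i j))

/-- Complete boundedness for a map `φ : A → L(Y)` defined on a `C⋆`-algebra `A`. -/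
def IsCBMapE {A : Type*} [Ring A] [StarRing A] [Algebra ℂ A] (φ : A → (Y →L[ℂ] Y)) : Prop :=
  ∃ c : ℝ, ∀ (k : ℕ) (Q : Matrix (Fin k) (Fin k) A),
    MatNormLe Q 1 → OpMatNormLe (Matrix.of fun i j => φ (Q i j)) c

/-- The strict positivity domain `ℙ_𝔔 = {Z ∈ Ξ : 𝔔(Z,Z)(I) ≻ 0}` of a kernel `𝔔` on `Ξ`. -/
def posDom {V : Type*} {N : Type*} [NormedAddCommGroup N] [InnerProductSpace ℂ N]
    [CompleteSpace N] (Ξ : NCSet V) (Q : KernelFam V ℂ (N →L[ℂ] N)) : NCSet V :=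
  fun n => {Z | Z ∈ Ξ n ∧ ∃ ε : ℝ, 0 < ε ∧
    MatPos (Q n n Z Z 1 - (ε : ℂ) • (1 : Matrix (Fin n) (Fin n) (N →L[ℂ] N)))}


/-!
Everything is block calculus for matrices indexed by `Σ i, Fin (d i)`. With `ιᵢ` the inclusion
of the `i`-th summand, the `(i, j)` block of `P` is `ιᵢᴴ P ιⱼ`, and `ιᵢ` intertwines `Zᵢ` with
`Z⁽⁰⁾ = ⊕ Zᵢ`. Hence `α` commutes with `Z⁽⁰⁾` iff every block `α_{i'i}` intertwines `Zᵢ` with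
`Z_{i'}`, so the bimodule identity for `φ_K`, read blockwise, is the nc-kernel identity for `K`;
conversely an intertwiner placed alone in block `(i', i)` lies in `S`. Since the block projections
`ιᵢ ιᵢᴴ` lie in `S`, a bimodule map `φ` is `φ_K` for `K(Zᵢ, Zⱼ)(P) = (φ(ιᵢ P ιⱼᴴ))ᵢⱼ`.

For positivity, `Q = Cᴴ C` is a sum of rank-one Gram matrices `[v_p v_qᴴ]_{p,q}`, and positivity
of `[φ_K (v_p v_qᴴ)]` is the cp-kernel inequality for the points indexed by pairs `(p, i)` and the
columns `v_p|_{block i}`. Conversely the cp-kernel inequality for columns `P_l` at `Z_{f l}` is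
positivity of `[φ_K (v_l v_{l'}ᴴ)]`, where `v_l` is `P_l` extended by zero.
-/

section ScalarAction

variable {M : Type*} [AddCommMonoid M] [Module ℂ M]

lemma cMul_cMul {l m n p : Type*} [Fintype m] [Fintype n] (α : Matrix l m ℂ)
    (α' : Matrix m n ℂ) (P : Matrix n p M) : cMul α (cMul α' P) = cMul (α * α') P := by
  ext i k
  simp only [cMul, Matrix.of_apply, Matrix.mul_apply, Finset.smul_sum, Finset.sum_smul, smul_smul]
  exact Finset.sum_comm

lemma mulC_mulC {l m n p : Type*} [Fintype m] [Fintype n] (P : Matrix l m M)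
    (β : Matrix m n ℂ) (β' : Matrix n p ℂ) : mulC (mulC P β) β' = mulC P (β * β') := by
  ext i k
  simp only [mulC, Matrix.of_apply, Matrix.mul_apply, Finset.smul_sum, Finset.sum_smul, smul_smul,
    mul_comm]
  exact Finset.sum_comm

lemma cMul_mulC {l m n p : Type*} [Fintype m] [Fintype n] (α : Matrix l m ℂ)
    (P : Matrix m n M) (β : Matrix n p ℂ) : cMul α (mulC P β) = mulC (cMul α P) β := by
  ext i k
  simp only [cMul, mulC, Matrix.of_apply, Finset.smul_sum, smul_comm (α i _)]
  exact Finset.sum_comm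

lemma cMul_one {m n : Type*} [Fintype m] [DecidableEq m] (P : Matrix m n M) :
    cMul (1 : Matrix m m ℂ) P = P := by
  ext i k
  simp [cMul, Matrix.one_apply, ite_smul]

lemma mulC_one {m n : Type*} [Fintype n] [DecidableEq n] (P : Matrix m n M) :
    mulC P (1 : Matrix n n ℂ) = P := by
  ext i k
  simp [mulC, Matrix.one_apply, ite_smul]

variable {m n m' n' : Type*} [Fintype m] [Fintype n]

lemma sandwich_apply (α : Matrix m' m ℂ) (P : Matrix m n M) (β : Matrix n' n ℂ) (i : m')
    (j : n') : sandwich α P β i j = ∑ l, star (β j l) • ∑ k, α i k • P k l := by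
  simp [sandwich, mulC, cMul, Matrix.conjTranspose_apply]

lemma sandwich_sandwich {m'' n'' : Type*} [Fintype m'] [Fintype n'] (α : Matrix m'' m' ℂ)
    (α' : Matrix m' m ℂ) (P : Matrix m n M) (β' : Matrix n' n ℂ) (β : Matrix n'' n' ℂ) :
    sandwich α (sandwich α' P β') β = sandwich (α * α') P (β * β') := by
  rw [sandwich, sandwich, cMul_mulC, cMul_cMul, mulC_mulC, sandwich, Matrix.conjTranspose_mul]

lemma sandwich_one [DecidableEq m] [DecidableEq n] (P : Matrix m n M) :
    sandwich (1 : Matrix m m ℂ) P 1 = P := by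
  rw [sandwich, cMul_one, Matrix.conjTranspose_one, mulC_one]

lemma sandwich_sum_left {ι : Type*} (s : Finset ι) (α : ι → Matrix m' m ℂ) (P : Matrix m n M)
    (β : Matrix n' n ℂ) :
    sandwich (∑ t ∈ s, α t) P β = (∑ t ∈ s, sandwich (α t) P β : Matrix m' n' M) := by
  ext i j
  simp only [sandwich_apply, Matrix.sum_apply, Finset.sum_smul, Finset.smul_sum]
  exact (Finset.sum_congr rfl fun _ _ => Finset.sum_comm).trans Finset.sum_comm

lemma sandwich_sum_right {ι : Type*} (s : Finset ι) (α : Matrix m' m ℂ) (P : Matrix m n M)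
    (β : ι → Matrix n' n ℂ) : sandwich α P (∑ t ∈ s, β t) = ∑ t ∈ s, sandwich α P (β t) := by
  ext i j
  simp only [sandwich_apply, Matrix.sum_apply, star_sum, Finset.sum_smul]
  exact Finset.sum_comm

lemma sandwich_eq_mul (α : Matrix m' m ℂ) (P : Matrix m n ℂ) (β : Matrix n' n ℂ) :
    sandwich α P β = α * P * βᴴ := by
  ext i j
  simp only [sandwich_apply, Matrix.mul_apply, Matrix.conjTranspose_apply, smul_eq_mul,
    Finset.sum_mul, Finset.mul_sum]
  exact Finset.sum_congr rfl fun _ _ => Finset.sum_congr rfl fun _ _ => by ring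

def sandwichLinearMap (α : Matrix m' m ℂ) (β : Matrix n' n ℂ) :
    Matrix m n M →ₗ[ℂ] Matrix m' n' M where
  toFun P := sandwich α P β
  map_add' P Q := by
    ext i j
    simp only [sandwich_apply, Matrix.add_apply, smul_add, Finset.sum_add_distrib]
  map_smul' c P := by
    ext i j
    simp only [sandwich_apply, Matrix.smul_apply, smul_comm _ c, Finset.smul_sum,
      RingHom.id_apply]

end ScalarAction

section SigmaBlocks

variable {ι : Type*} {κ : ι → Type*}

def sigmaBlock {R : Type*} (i j : ι) (P : Matrix (Σ i, κ i) (Σ i, κ i) R) :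
    Matrix (κ i) (κ j) R :=
  P.submatrix (Sigma.mk i) (Sigma.mk j)

lemma sigmaBlock_ext {R : Type*} {P Q : Matrix (Σ i, κ i) (Σ i, κ i) R}
    (h : ∀ i j, sigmaBlock i j P = sigmaBlock i j Q) : P = Q := by
  ext ⟨i, a⟩ ⟨j, b⟩
  exact congrFun (congrFun (h i j) a) b

lemma sigmaBlock_vecMulVec_extend {R : Type*} [Mul R] [Zero R] [Star R] (i j : ι)
    (u : κ i → R) (w : κ j → R) :
    sigmaBlock i j (Matrix.vecMulVec (Function.extend (Sigma.mk i) u 0)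
      (star (Function.extend (Sigma.mk j) w 0))) = Matrix.vecMulVec u (star w) := by
  ext a b
  simp [sigmaBlock, Matrix.vecMulVec_apply, sigma_mk_injective.extend_apply]

variable [DecidableEq ι] [∀ i, DecidableEq (κ i)]

variable (κ) in
def sigmaIncl (i : ι) : Matrix (Σ i, κ i) (κ i) ℂ :=
  Matrix.of fun x a => if x = (⟨i, a⟩ : Σ i, κ i) then 1 else 0

variable [∀ i, Fintype (κ i)] {M : Type*} [AddCommMonoid M] [Module ℂ M]

def sigmaEmbed (i j : ι) (P : Matrix (κ i) (κ j) M) : Matrix (Σ i, κ i) (Σ i, κ i) M :=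
  sandwich (sigmaIncl κ i) P (sigmaIncl κ j)

lemma sigmaEmbed_eq_mul (i j : ι) (α : Matrix (κ i) (κ j) ℂ) :
    sigmaEmbed i j α = sigmaIncl κ i * α * (sigmaIncl κ j)ᴴ :=
  sandwich_eq_mul _ _ _

variable [Fintype ι]

lemma conjTranspose_sigmaIncl_mul_self (i : ι) :
    (sigmaIncl κ i)ᴴ * sigmaIncl κ i = 1 := by
  ext a b
  simp [sigmaIncl, Matrix.mul_apply, Matrix.one_apply, eq_comm]

lemma sum_sigmaIncl_mul_conjTranspose :
    ∑ i, sigmaIncl κ i * (sigmaIncl κ i)ᴴ = 1 := by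
  ext x y
  simp only [sigmaIncl, Matrix.sum_apply, Matrix.mul_apply, Matrix.of_apply,
    Matrix.conjTranspose_apply, RCLike.star_def, MonoidWithZeroHom.map_ite_one_zero, mul_ite,
    mul_one, mul_zero, Matrix.one_apply]
  exact (Fintype.sum_sigma fun u => if y = u then if x = u then (1 : ℂ) else 0 else 0).symm.trans
    (by simp)

lemma sigmaBlock_eq_sandwich (i j : ι) (P : Matrix (Σ i, κ i) (Σ i, κ i) M) :
    sigmaBlock i j P = sandwich (sigmaIncl κ i)ᴴ P (sigmaIncl κ j)ᴴ := by
  ext a b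
  simp [sigmaBlock, sandwich_apply, sigmaIncl]

lemma sigmaBlock_eq_mul (i j : ι) (α : Matrix (Σ i, κ i) (Σ i, κ i) ℂ) :
    sigmaBlock i j α = (sigmaIncl κ i)ᴴ * α * sigmaIncl κ j := by
  rw [sigmaBlock_eq_sandwich, sandwich_eq_mul, Matrix.conjTranspose_conjTranspose]

lemma sigmaBlock_sandwich (i' j' : ι) (α β : Matrix (Σ i, κ i) (Σ i, κ i) ℂ)
    (P : Matrix (Σ i, κ i) (Σ i, κ i) M) :
    sigmaBlock i' j' (sandwich α P β) =
      ∑ i, ∑ j, sandwich (sigmaBlock i' i α) (sigmaBlock i j P) (sigmaBlock j' j β) := by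
  simp only [sigmaBlock_eq_mul _ _ α, sigmaBlock_eq_mul _ _ β, sigmaBlock_eq_sandwich _ _ P,
    sandwich_sandwich, Matrix.mul_assoc, ← sandwich_sum_right, ← sandwich_sum_left,
    ← Matrix.mul_sum]
  rw [sum_sigmaIncl_mul_conjTranspose, Matrix.mul_one, Matrix.mul_one, sigmaBlock_eq_sandwich,
    sandwich_sandwich]

lemma sigmaBlock_sigmaEmbed (i j : ι) (P : Matrix (κ i) (κ j) M) :
    sigmaBlock i j (sigmaEmbed i j P) = P := by
  rw [sigmaEmbed, sigmaBlock_eq_sandwich, sandwich_sandwich, conjTranspose_sigmaIncl_mul_self,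
    conjTranspose_sigmaIncl_mul_self, sandwich_one]

lemma sigmaBlock_sandwich_sigmaEmbed {i i' j j' : ι} (α : Matrix (κ i') (κ i) ℂ)
    (β : Matrix (κ j') (κ j) ℂ) (P : Matrix (Σ i, κ i) (Σ i, κ i) M) :
    sigmaBlock i' j' (sandwich (sigmaEmbed i' i α) P (sigmaEmbed j' j β)) =
      sandwich α (sigmaBlock i j P) β := by
  simp only [sigmaEmbed_eq_mul, sigmaBlock_eq_sandwich, sandwich_sandwich]
  rw [← Matrix.mul_assoc, ← Matrix.mul_assoc, conjTranspose_sigmaIncl_mul_self, Matrix.one_mul,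
    ← Matrix.mul_assoc, ← Matrix.mul_assoc, conjTranspose_sigmaIncl_mul_self, Matrix.one_mul]

lemma sigmaEmbed_sigmaBlock (i j : ι) (P : Matrix (Σ i, κ i) (Σ i, κ i) M) :
    sigmaEmbed i j (sigmaBlock i j P) = sandwich (sigmaEmbed i i 1) P (sigmaEmbed j j 1) := by
  rw [sigmaEmbed_eq_mul, sigmaEmbed_eq_mul, Matrix.mul_one, Matrix.mul_one, sigmaBlock_eq_sandwich,
    sigmaEmbed, sandwich_sandwich]

end SigmaBlocks

section SigmaSums

variable {ι : Type*} {κ : ι → Type*} [Fintype ι] [∀ i, Fintype (κ i)] {R : Type*}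
  [AddCommMonoid R]

lemma sum_sigma_eq_sum_fiber (i : ι) (F : (Σ i, κ i) → R) (hF : ∀ x, x.1 ≠ i → F x = 0) :
    ∑ x, F x = ∑ a, F ⟨i, a⟩ := by
  rw [Fintype.sum_sigma]
  exact Finset.sum_eq_single i (fun j _ hj => Finset.sum_eq_zero fun a _ => hF ⟨j, a⟩ hj)
    (by simp)

lemma sum_prod_sigma_comm {k : Type*} [Fintype k] (G : k → (Σ i, κ i) → k → (Σ i, κ i) → R) :
    ∑ l : k × ι, ∑ l' : k × ι, ∑ a : κ l.2, ∑ b : κ l'.2, G l.1 ⟨l.2, a⟩ l'.1 ⟨l'.2, b⟩ =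
      ∑ p, ∑ q, ∑ x, ∑ x', G p x q x' :=
  calc _ = ∑ l : k × ι, ∑ a : κ l.2, ∑ l' : k × ι, ∑ b : κ l'.2,
        G l.1 ⟨l.2, a⟩ l'.1 ⟨l'.2, b⟩ := Finset.sum_congr rfl fun _ _ => Finset.sum_comm
    _ = ∑ p, ∑ x, ∑ q, ∑ x', G p x q x' := by simp only [Fintype.sum_prod_type, Fintype.sum_sigma]
    _ = _ := Finset.sum_congr rfl fun _ _ => Finset.sum_comm

end SigmaSums

section DirectSum

variable {V : Type*} [AddCommMonoid V] {Np : ℕ} {d : Fin Np → ℕ}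
  {Z : ∀ i, Matrix (Fin (d i)) (Fin (d i)) V}

lemma dirSum_apply_mk (i j : Fin Np) (a : Fin (d i)) (b : Fin (d j)) :
    dirSum Z ⟨i, a⟩ ⟨j, b⟩ = if h : i = j then Z j (Fin.cast (congrArg d h) a) b else 0 := by
  by_cases h : i = j
  · subst h
    simp [dirSum]
  · simp [dirSum, h]

variable [Module ℂ V]

lemma cMul_sigmaIncl (i : Fin Np) :
    cMul (sigmaIncl _ i) (Z i) = mulC (dirSum Z) (sigmaIncl _ i) := by
  ext ⟨k, a⟩ b
  by_cases hk : k = i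
  · subst hk
    simp [cMul, mulC, sigmaIncl, dirSum_apply_mk]
  · simp [cMul, mulC, sigmaIncl, dirSum_apply_mk, hk]

lemma cMul_conjTranspose_sigmaIncl (i : Fin Np) :
    cMul (sigmaIncl _ i)ᴴ (dirSum Z) = mulC (Z i) (sigmaIncl _ i)ᴴ := by
  ext a ⟨k, b⟩
  by_cases hk : i = k
  · subst hk
    simp [cMul, mulC, sigmaIncl, dirSum_apply_mk]
  · simp [cMul, mulC, sigmaIncl, dirSum_apply_mk, hk, Ne.symm hk]

lemma sigmaBlock_intertwines {α : Matrix (BIx d) (BIx d) ℂ} (hα : α ∈ interAlg Z)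
    (i' i : Fin Np) : cMul (sigmaBlock i' i α) (Z i) = mulC (Z i') (sigmaBlock i' i α) := by
  have hα : cMul α (dirSum Z) = mulC (dirSum Z) α := hα
  rw [sigmaBlock_eq_mul, ← cMul_cMul, cMul_sigmaIncl, cMul_mulC, ← cMul_cMul, hα, cMul_mulC,
    cMul_conjTranspose_sigmaIncl, mulC_mulC, mulC_mulC, Matrix.mul_assoc]

lemma sigmaEmbed_mem_interAlg {i' i : Fin Np} {α : Matrix (Fin (d i')) (Fin (d i)) ℂ}
    (hα : cMul α (Z i) = mulC (Z i') α) : sigmaEmbed i' i α ∈ interAlg Z := by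
  show cMul _ _ = mulC _ _
  rw [sigmaEmbed_eq_mul, ← cMul_cMul, cMul_conjTranspose_sigmaIncl, cMul_mulC, ← cMul_cMul, hα,
    cMul_mulC, cMul_sigmaIncl, mulC_mulC, mulC_mulC, Matrix.mul_assoc]

end DirectSum

section BlockMap

variable {Np : ℕ} {d : Fin Np → ℕ} {A B : Type*}

lemma sigmaBlock_phiK (K : KernelIx d A B) (i j : Fin Np) (P : Matrix (BIx d) (BIx d) A) :
    sigmaBlock i j (phiK K P) = K i j (sigmaBlock i j P) :=
  rfl

lemma phiK_apply_mk (K : KernelIx d A B) (P : Matrix (BIx d) (BIx d) A) (i j : Fin Np)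
    (a : Fin (d i)) (b : Fin (d j)) : phiK K P ⟨i, a⟩ ⟨j, b⟩ = K i j (sigmaBlock i j P) a b :=
  rfl

variable [AddCommMonoid A] [Module ℂ A]

def kernelOfBlockMap (φ : Matrix (BIx d) (BIx d) A → Matrix (BIx d) (BIx d) B) :
    KernelIx d A B :=
  fun i j P => sigmaBlock i j (φ (sigmaEmbed i j P))

lemma kernelOfBlockMap_phiK (K : KernelIx d A B) : kernelOfBlockMap (phiK K) = K := by
  funext i j P
  show K i j (sigmaBlock i j (sigmaEmbed i j P : Matrix (BIx d) (BIx d) A)) = K i j P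
  rw [sigmaBlock_sigmaEmbed]

variable [AddCommMonoid B] [Module ℂ B]

lemma gradedLinearIx_kernelOfBlockMap
    (φ : Matrix (BIx d) (BIx d) A →ₗ[ℂ] Matrix (BIx d) (BIx d) B) :
    GradedLinearIx (kernelOfBlockMap φ) := by
  intro i j
  have h : kernelOfBlockMap φ i j = ⇑(sandwichLinearMap (sigmaIncl _ i)ᴴ (sigmaIncl _ j)ᴴ ∘ₗ φ ∘ₗ
      sandwichLinearMap (sigmaIncl _ i) (sigmaIncl _ j)) :=
    funext fun P => sigmaBlock_eq_sandwich _ _ _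
  exact h ▸ LinearMap.isLinear _

def GradedLinearIx.phiKLinearMap {K : KernelIx d A B} (hl : GradedLinearIx K) :
    Matrix (BIx d) (BIx d) A →ₗ[ℂ] Matrix (BIx d) (BIx d) B where
  toFun := phiK K
  map_add' P Q := by
    ext x y
    exact congrFun (congrFun ((hl x.1 y.1).map_add _ _) x.2) y.2
  map_smul' c P := by
    ext x y
    exact congrFun (congrFun ((hl x.1 y.1).map_smul _ _) x.2) y.2

variable {V : Type*} [AddCommMonoid V] [Module ℂ V] {Z : ∀ i, Matrix (Fin (d i)) (Fin (d i)) V}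

lemma phiK_kernelOfBlockMap {φ : Matrix (BIx d) (BIx d) A → Matrix (BIx d) (BIx d) B}
    (hφ : IsBimod (interAlg Z) φ) : phiK (kernelOfBlockMap φ) = φ := by
  have hproj (i : Fin Np) : sigmaEmbed i i 1 ∈ interAlg Z :=
    sigmaEmbed_mem_interAlg (by rw [cMul_one, mulC_one])
  funext P
  refine sigmaBlock_ext fun i j => ?_
  rw [sigmaBlock_phiK]
  show sigmaBlock i j (φ (sigmaEmbed i j (sigmaBlock i j P))) = _
  rw [sigmaEmbed_sigmaBlock, hφ _ (hproj i) _ (hproj j), sigmaBlock_sandwich_sigmaEmbed,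
    sandwich_one]

lemma isBimod_phiK {K : KernelIx d A B} (hl : GradedLinearIx K) (hK : IsNCKernelIx Z K) :
    IsBimod (interAlg Z) (phiK K) := by
  intro α hα β hβ P
  refine sigmaBlock_ext fun i' j' => ?_
  rw [sigmaBlock_phiK, sigmaBlock_sandwich, sigmaBlock_sandwich]
  change IsLinearMap.mk' _ (hl i' j') _ = _
  simp only [map_sum]
  refine Finset.sum_congr rfl fun i _ => Finset.sum_congr rfl fun j _ => ?_
  rw [IsLinearMap.mk'_apply, sigmaBlock_phiK,
    hK i i' j j' _ _ (sigmaBlock_intertwines hα i' i) (sigmaBlock_intertwines hβ j' j)]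

lemma isNCKernelIx_of_isBimod {K : KernelIx d A B} (hK : IsBimod (interAlg Z) (phiK K)) :
    IsNCKernelIx Z K := by
  intro i i' j j' α β hα hβ P
  have h := congrArg (sigmaBlock i' j')
    (hK _ (sigmaEmbed_mem_interAlg hα) _ (sigmaEmbed_mem_interAlg hβ) (sigmaEmbed i j P))
  rwa [sigmaBlock_phiK, sigmaBlock_sandwich_sigmaEmbed, sigmaBlock_sandwich_sigmaEmbed,
    sigmaBlock_phiK, sigmaBlock_sigmaEmbed, eq_comm] at h

end BlockMap

section Positivity

lemma mul_conjTranspose_eq_vecMulVec {m n n' R : Type*} [Fintype m] [Unique m]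
    [NonUnitalSemiring R] [StarRing R] (P : Matrix n m R) (Q : Matrix n' m R) :
    P * Qᴴ = Matrix.vecMulVec (fun a => P a default) (star fun b => Q b default) := by
  ext a b
  simp [Matrix.mul_apply, Matrix.vecMulVec_apply]

lemma matPos_vecMulVec_star {k n R : Type*} [Fintype k] [Fintype n] [NonUnitalSemiring R]
    [StarRing R] (v : k → n → R) :
    MatPos (Matrix.of fun p q => Matrix.vecMulVec (v p) (star (v q))) := by
  classical
  rcases isEmpty_or_nonempty (k × n) with h | ⟨r₀, w₀⟩
  · exact ⟨0, by ext p q x; exact (h.false (p, x)).elim⟩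
  refine ⟨Matrix.of fun r p => Matrix.of fun w x => if r = r₀ ∧ w = w₀ then star (v p x) else 0,
    ?_⟩
  ext p q x y
  simp [Matrix.mul_apply, Matrix.sum_apply, Matrix.vecMulVec_apply, ite_and]

lemma conjTranspose_mul_self_eq_sum_vecMulVec {k n R : Type*} [Fintype k] [Fintype n]
    [NonUnitalSemiring R] [StarRing R] (C : Matrix k k (Matrix n n R)) :
    Cᴴ * C = ∑ r, ∑ w, Matrix.of fun p q =>
      Matrix.vecMulVec (fun x => star (C r p w x)) (star fun y => star (C r q w y)) := by
  ext p q x y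
  simp [Matrix.mul_apply, Matrix.sum_apply, Matrix.vecMulVec_apply, Matrix.conjTranspose_apply,
    Matrix.star_apply]

variable {Y : Type*} [NormedAddCommGroup Y] [InnerProductSpace ℂ Y] {k n : Type*} [Fintype k]
  [Fintype n]

lemma OpMatPos2.add {T T' : Matrix k k (Matrix n n (Y →L[ℂ] Y))} (hT : OpMatPos2 T)
    (hT' : OpMatPos2 T') : OpMatPos2 (T + T') := by
  intro y
  simpa only [Matrix.add_apply, add_apply, inner_add_right,
    Finset.sum_add_distrib] using add_nonneg (hT y) (hT' y)

lemma OpMatPos2.sum {ι : Type*} (s : Finset ι) {T : ι → Matrix k k (Matrix n n (Y →L[ℂ] Y))}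
    (hT : ∀ t ∈ s, OpMatPos2 (T t)) : OpMatPos2 (∑ t ∈ s, T t) :=
  Finset.sum_induction _ OpMatPos2 (fun _ _ => OpMatPos2.add) (fun y => by simp) hT

end Positivity

section CompletePositivity

variable {Np : ℕ} {d : Fin Np → ℕ} {Y : Type*} [NormedAddCommGroup Y] [InnerProductSpace ℂ Y]
  {A : Type*} [NonUnitalSemiring A] [StarRing A] {K : KernelIx d A (Y →L[ℂ] Y)}

lemma IsCPIxH.nonneg_of_fintype (hK : IsCPIxH K) {ι : Type*} [Fintype ι] (f : ι → Fin Np)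
    (P : ∀ l, Matrix (Fin (d (f l))) (Fin 1) A) (y : ∀ l, Fin (d (f l)) → Y) :
    0 ≤ ∑ l, ∑ l', ∑ a, ∑ b,
      (inner ℂ (y l a) (K (f l) (f l') (P l * (P l')ᴴ) a b (y l' b)) : ℂ) := by
  let e := (Fintype.equivFin ι).symm
  refine (hK _ (f ∘ e) (fun l => P (e l)) (fun l => y (e l))).trans_eq ?_
  exact Fintype.sum_equiv e _ _ fun l => Fintype.sum_equiv e _ _ fun l' => rfl

lemma IsCPIxH.opMatPos2_phiK_vecMulVec (hK : IsCPIxH K) {k : Type*} [Fintype k]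
    (v : k → BIx d → A) :
    OpMatPos2 (Matrix.of fun p q => phiK K (Matrix.vecMulVec (v p) (star (v q)))) := by
  intro y
  have h := hK.nonneg_of_fintype (ι := k × Fin Np) Prod.snd
    (fun l => Matrix.of fun a _ => v l.1 ⟨l.2, a⟩) (fun l a => y l.1 ⟨l.2, a⟩)
  simp only [mul_conjTranspose_eq_vecMulVec] at h
  exact h.trans_eq (sum_prod_sigma_comm fun p x q x' =>
    (inner ℂ (y p x) (phiK K (Matrix.vecMulVec (v p) (star (v q))) x x' (y q x')) : ℂ))

lemma isCPIxH_of_isCPMap (hK : IsCPMap (phiK K)) : IsCPIxH K := by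
  intro L f P y
  let v (l : Fin L) : BIx d → A := Function.extend (Sigma.mk (f l)) (fun a => P l a 0) 0
  let yt (l : Fin L) : BIx d → Y := Function.extend (Sigma.mk (f l)) (y l) 0
  have hyt (l : Fin L) (x : BIx d) (hx : x.1 ≠ f l) : yt l x = 0 :=
    Function.extend_apply' _ _ _ fun ⟨a, ha⟩ => hx (congrArg Sigma.fst ha).symm
  refine (hK L _ (matPos_vecMulVec_star v) yt).trans_eq
    (Finset.sum_congr rfl fun l _ => Finset.sum_congr rfl fun l' _ => ?_)
  rw [sum_sigma_eq_sum_fiber (f l) _ fun x hx => by simp [hyt l x hx]]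
  refine Finset.sum_congr rfl fun a _ => ?_
  rw [sum_sigma_eq_sum_fiber (f l') _ fun x hx => by simp [hyt l' x hx]]
  refine Finset.sum_congr rfl fun b _ => ?_
  simp only [yt, v, Matrix.of_apply, sigma_mk_injective.extend_apply, phiK_apply_mk,
    sigmaBlock_vecMulVec_extend, mul_conjTranspose_eq_vecMulVec, Fin.default_eq_zero]

lemma isCPMap_phiK [Module ℂ A] (hl : GradedLinearIx K) (hK : IsCPIxH K) : IsCPMap (phiK K) := by
  rintro k Q ⟨C, rfl⟩
  change OpMatPos2 (hl.phiKLinearMap.mapMatrix (Cᴴ * C))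
  rw [conjTranspose_mul_self_eq_sum_vecMulVec, map_sum]
  refine OpMatPos2.sum _ fun r _ => ?_
  rw [map_sum]
  exact OpMatPos2.sum _ fun w _ => hK.opMatPos2_phiK_vecMulVec _

end CompletePositivity

theorem statement2_general {V : Type*} [AddCommGroup V] [Module ℂ V]
    {A : Type*} [CStarAlgebra A]
    {Y : Type*} [NormedAddCommGroup Y] [InnerProductSpace ℂ Y]
    {Np : ℕ} (d : Fin Np → ℕ) (Z : ∀ i : Fin Np, Matrix (Fin (d i)) (Fin (d i)) V) :
    (∀ K : KernelIx d A (Y →L[ℂ] Y), GradedLinearIx K →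
        ((IsNCKernelIx Z K ∧ IsCPIxH K) ↔
          (IsBimod (interAlg Z) (phiK K) ∧ IsCPMap (phiK K)))) ∧
    (∀ φ : Matrix (BIx d) (BIx d) A →ₗ[ℂ] Matrix (BIx d) (BIx d) (Y →L[ℂ] Y),
        IsBimod (interAlg Z) ⇑φ → IsCPMap ⇑φ →
        ∃! K : KernelIx d A (Y →L[ℂ] Y),
          (GradedLinearIx K ∧ IsNCKernelIx Z K ∧ IsCPIxH K) ∧ phiK K = ⇑φ) := by
  refine ⟨fun K hl => ⟨fun ⟨hnc, hcp⟩ => ⟨isBimod_phiK hl hnc, isCPMap_phiK hl hcp⟩,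
    fun ⟨hb, hcp⟩ => ⟨isNCKernelIx_of_isBimod hb, isCPIxH_of_isCPMap hcp⟩⟩, fun φ hb hcp => ?_⟩
  have hφ : phiK (kernelOfBlockMap φ) = φ := phiK_kernelOfBlockMap hb
  refine ⟨kernelOfBlockMap φ, ⟨⟨gradedLinearIx_kernelOfBlockMap φ,
    isNCKernelIx_of_isBimod (by rwa [hφ]), isCPIxH_of_isCPMap (by rwa [hφ])⟩, hφ⟩, ?_⟩
  rintro K ⟨-, hK⟩
  rw [← kernelOfBlockMap_phiK K, hK]

/-- Proposition 2.3(2): for a finite set of nc points `Ω` with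
intertwining algebra `S = interAlg Z`, a graded (linear) kernel `K` on `Ω` is a completely
positive noncommutative kernel iff the associated block map `φ_K` is a completely positive
`(S,S^*)`-bimodule map; conversely every completely positive `(S,S^*)`-bimodule map `φ`
equals `φ_K` for a uniquely determined completely positive nc kernel `K` on `Ω`. -/
theorem statement2 {V : Type*} [AddCommGroup V] [Module ℂ V]
    {A : Type*} [CStarAlgebra A]
    {Y : Type*} [NormedAddCommGroup Y] [InnerProductSpace ℂ Y] [CompleteSpace Y]
    {Np : ℕ} (d : Fin Np → ℕ) (Z : ∀ i : Fin Np, Matrix (Fin (d i)) (Fin (d i)) V) :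
    (∀ K : KernelIx d A (Y →L[ℂ] Y), GradedLinearIx K →
        ((IsNCKernelIx Z K ∧ IsCPIxH K) ↔
          (IsBimod (interAlg Z) (phiK K) ∧ IsCPMap (phiK K)))) ∧
    (∀ φ : Matrix (BIx d) (BIx d) A →ₗ[ℂ] Matrix (BIx d) (BIx d) (Y →L[ℂ] Y),
        IsBimod (interAlg Z) ⇑φ → IsCPMap ⇑φ →
        ∃! K : KernelIx d A (Y →L[ℂ] Y),
          (GradedLinearIx K ∧ IsNCKernelIx Z K ∧ IsCPIxH K) ∧ phiK K = ⇑φ) :=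
  statement2_general d Z

end NCK

end
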